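/- Let Ω ⊂ ℝ^k be open with Lebesgue measure μ, let ψ be a strictly increasing Young function satisfying condition Δ2 globally with lim_{t→0+} ψ(t)/t = 0 and lim_{t→∞} t/ψ(t) = 0, and let τ(t)=1/ψ(1/t) for t>0, τ(0)=0. Then for every measurable set E ⊂ Ω with μ(E) < ∞ there exists a constant C(E) < ∞ such that ∫_E f dμ ≤ C(E) · ∫₀^∞ τ⁻¹(μ_f(s)) ds for every nonnegative measurable function f on Ω. -/

import Mathlib

open MeasureTheory Filter Topology Set
open scoped ENNReal

/-- A (finite-valued) Young function: non-decreasing, left-continuous and convex on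
`[0, ∞)`, with `ψ 0 = 0 = lim_{t→0+} ψ t` and `lim_{t→∞} ψ t = ∞`. -/
def IsYoung (ψ : ℝ → ℝ) : Prop :=
  MonotoneOn ψ (Set.Ici 0) ∧
  ConvexOn ℝ (Set.Ici 0) ψ ∧
  (∀ t : ℝ, 0 < t → Tendsto ψ (𝓝[<] t) (𝓝 (ψ t))) ∧
  ψ 0 = 0 ∧ Tendsto ψ (𝓝[>] 0) (𝓝 0) ∧
  Tendsto ψ atTop atTop

/-- The Young function `ψ` satisfies condition `Δ₂` globally. -/
def Delta2 (ψ : ℝ → ℝ) : Prop :=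
  ∃ d : ℝ, 1 < d ∧ ∀ t : ℝ, 0 < t → ψ (2 * t) ≤ d * ψ t

/-- The distribution function `μ_f(s) = μ {x ∈ Ω : f x > s}` of a nonnegative
function `f` on `Ω`. -/
noncomputable def distribFn₀ {k : ℕ} (Ω : Set (EuclideanSpace ℝ (Fin k)))
    (f : EuclideanSpace ℝ (Fin k) → ℝ) (s : ℝ) : ℝ≥0∞ :=
  volume {x | x ∈ Ω ∧ s < f x}

/-- The `[0, ∞]`-valued extension of `σ = τ⁻¹ : [0, ∞) → [0, ∞)`. -/
noncomputable def extInv (σ : ℝ → ℝ) : ℝ≥0∞ → ℝ≥0∞ :=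
  fun a => if a = ∞ then ∞ else ENNReal.ofReal (σ a.toReal)

/-- The functional `ρ(f) = ∫₀^∞ τ⁻¹(μ_f(s)) ds` on nonnegative measurable functions
on `Ω`, where `σ = τ⁻¹`. -/
noncomputable def rhoFn {k : ℕ} (Ω : Set (EuclideanSpace ℝ (Fin k))) (σ : ℝ → ℝ)
    (f : EuclideanSpace ℝ (Fin k) → ℝ) : ℝ≥0∞ :=
  ∫⁻ s in Set.Ioi (0 : ℝ), extInv σ (distribFn₀ Ω f s)

/-!
By the layer-cake formula, `∫_E f = ∫₀^∞ μ(E ∩ {f > s}) ds`, and `μ(E ∩ {f > s})` is at most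
both `A = μ(E)` and `μ_f(s)`. Convexity of `ψ` with `ψ 0 = 0` makes `ψ(v)/v` nondecreasing, so
`τ(u)/u = (1/u)/ψ(1/u)` is nondecreasing; so `τ⁻¹` is nondecreasing and `τ⁻¹(a)/a` is
nonincreasing. Hence `a ≤ (A / τ⁻¹(A)) · τ⁻¹(a)` for `0 < a ≤ A`, and one may take
`C(E) = A / τ⁻¹(A)`.
-/

theorem ConvexOn.div_le_div_of_map_zero {ψ : ℝ → ℝ} (hψ : ConvexOn ℝ (Ici 0) ψ) (hψ0 : ψ 0 = 0)
    {x y : ℝ} (hx : 0 < x) (hxy : x ≤ y) : ψ x / x ≤ ψ y / y := by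
  have hy := hx.trans_le hxy
  simpa [hψ0] using hψ.secant_mono self_mem_Ici hx.le hy.le hx.ne' hy.ne' hxy

-- `0 < τ U` keeps `U` out of the range where `ψ (1 / U) = 0` and `τ U = 1 / 0` is a junk value.
theorem inv_comp_inv_mul_le_mul {ψ τ : ℝ → ℝ} (hψ : ConvexOn ℝ (Ici 0) ψ) (hψ0 : ψ 0 = 0)
    (hτ0 : τ 0 = 0) (hτ : ∀ t : ℝ, 0 < t → τ t = 1 / ψ (1 / t)) {u U : ℝ} (hu : 0 ≤ u)
    (huU : u ≤ U) (hτU : 0 < τ U) : τ u * U ≤ τ U * u := by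
  rcases hu.eq_or_lt with rfl | hu
  · simp [hτ0]
  have hU := hu.trans_le huU
  have hψU : 0 < ψ (1 / U) := one_div_pos.mp (hτ U hU ▸ hτU)
  have hslope : U * ψ (1 / U) ≤ u * ψ (1 / u) := by
    simpa [div_eq_mul_inv, mul_comm] using
      hψ.div_le_div_of_map_zero hψ0 (one_div_pos.2 hU) (one_div_le_one_div_of_le hu huU)
  have hψu : 0 < ψ (1 / u) := pos_of_mul_pos_right ((mul_pos hU hψU).trans_le hslope) hu.le
  rw [hτ u hu, hτ U hU, one_div_mul_eq_div, one_div_mul_eq_div, div_le_div_iff₀ hψu hψU]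
  linarith

section RightInverse

variable {τ σ : ℝ → ℝ}

theorem monotoneOn_Ioi_of_rightInvOn
    (hR : ∀ u U : ℝ, 0 ≤ u → u ≤ U → 0 < τ U → τ u * U ≤ τ U * u)
    (hσ_nonneg : ∀ t : ℝ, 0 ≤ t → 0 ≤ σ t) (hσ_right : ∀ t : ℝ, 0 ≤ t → τ (σ t) = t) :
    MonotoneOn σ (Ioi 0) := by
  intro s hs t ht hst
  by_contra! hlt
  have h := hR (σ t) (σ s) (hσ_nonneg t ht.le) hlt.le (by rwa [hσ_right s hs.le])
  rw [hσ_right t ht.le, hσ_right s hs.le] at h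
  nlinarith [hσ_nonneg t ht.le, mem_Ioi.mp hs]

theorem mul_le_mul_of_rightInvOn
    (hR : ∀ u U : ℝ, 0 ≤ u → u ≤ U → 0 < τ U → τ u * U ≤ τ U * u)
    (hσ_nonneg : ∀ t : ℝ, 0 ≤ t → 0 ≤ σ t) (hσ_right : ∀ t : ℝ, 0 ≤ t → τ (σ t) = t)
    {a A : ℝ} (ha : 0 < a) (haA : a ≤ A) : a * σ A ≤ A * σ a := by
  have hA := ha.trans_le haA
  have h := hR (σ a) (σ A) (hσ_nonneg a ha.le)
    (monotoneOn_Ioi_of_rightInvOn hR hσ_nonneg hσ_right ha hA haA) (by rwa [hσ_right A hA.le])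
  rwa [hσ_right a ha.le, hσ_right A hA.le] at h

end RightInverse

theorem le_ofReal_mul_extInv {σ : ℝ → ℝ} {A : ℝ} (hA : 0 < A) (hσA : 0 < σ A)
    (hσ : MonotoneOn σ (Ioi 0)) (hkey : ∀ a : ℝ, 0 < a → a ≤ A → a * σ A ≤ A * σ a)
    {a b : ℝ≥0∞} (hab : a ≤ b) (haA : a ≤ ENNReal.ofReal A) :
    a ≤ ENNReal.ofReal (A / σ A) * extInv σ b := by
  rcases eq_or_ne a 0 with rfl | ha0
  · exact zero_le
  by_cases hb : b = ∞
  · simp [extInv, hb, div_pos hA hσA]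
  have ha_top : a ≠ ∞ := ne_top_of_le_ne_top hb hab
  have ha : 0 < a.toReal := ENNReal.toReal_pos ha0 ha_top
  rw [extInv, if_neg hb, ← ENNReal.ofReal_mul (div_pos hA hσA).le, ← ENNReal.ofReal_toReal ha_top]
  apply ENNReal.ofReal_le_ofReal
  calc a.toReal ≤ A / σ A * σ a.toReal := by
        rw [div_mul_eq_mul_div, le_div_iff₀ hσA]
        exact hkey _ ha (ENNReal.toReal_le_of_le_ofReal hA.le haA)
    _ ≤ A / σ A * σ b.toReal := by
        gcongr
        exact hσ ha (ha.trans_le (ENNReal.toReal_mono hb hab)) (ENNReal.toReal_mono hb hab)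

theorem restrict_meas_lt_le_distribFn₀ {k : ℕ} {Ω E : Set (EuclideanSpace ℝ (Fin k))}
    (hE : MeasurableSet E) (hEΩ : E ⊆ Ω) (f : EuclideanSpace ℝ (Fin k) → ℝ) (s : ℝ) :
    volume.restrict E {x | s < f x} ≤ distribFn₀ Ω f s := by
  rw [Measure.restrict_apply' hE]
  exact measure_mono fun x hx => ⟨hEΩ hx.2, hx.1⟩

theorem stmt14_general {k : ℕ}
    (Ω : Set (EuclideanSpace ℝ (Fin k)))
    (ψ : ℝ → ℝ) (hY : IsYoung ψ)
    (τ : ℝ → ℝ) (hτ0 : τ 0 = 0) (hτ : ∀ t : ℝ, 0 < t → τ t = 1 / ψ (1 / t))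
    (σ : ℝ → ℝ) (hσ_nonneg : ∀ t : ℝ, 0 ≤ t → 0 ≤ σ t)
    (hσ_right : ∀ t : ℝ, 0 ≤ t → τ (σ t) = t) :
    ∀ E : Set (EuclideanSpace ℝ (Fin k)), MeasurableSet E → E ⊆ Ω → volume E < ∞ →
      ∃ C : ℝ≥0∞, C < ∞ ∧
        ∀ f : EuclideanSpace ℝ (Fin k) → ℝ, Measurable f →
          (∀ᵐ x ∂(volume.restrict Ω), 0 ≤ f x) →
          ∫⁻ x in E, ENNReal.ofReal (f x) ≤ C * rhoFn Ω σ f := by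
  intro E hE hEΩ hEfin
  rcases eq_or_ne (volume E) 0 with hE0 | hE0
  · exact ⟨0, ENNReal.zero_lt_top, fun f _ _ => by simp [Measure.restrict_eq_zero.mpr hE0]⟩
  have hR : ∀ u U : ℝ, 0 ≤ u → u ≤ U → 0 < τ U → τ u * U ≤ τ U * u :=
    fun _ _ => inv_comp_inv_mul_le_mul hY.2.1 hY.2.2.2.1 hτ0 hτ
  set A := (volume E).toReal
  have hA : 0 < A := ENNReal.toReal_pos hE0 hEfin.ne
  have hσA : 0 < σ A := (hσ_nonneg A hA.le).lt_of_ne fun h => by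
    have := hσ_right A hA.le
    rw [← h, hτ0] at this
    exact hA.ne this
  refine ⟨ENNReal.ofReal (A / σ A), ENNReal.ofReal_lt_top, fun f hf hf0 => ?_⟩
  rw [lintegral_eq_lintegral_meas_lt _ (ae_restrict_of_ae_restrict_of_subset hEΩ hf0)
    hf.aemeasurable, rhoFn, ← lintegral_const_mul' _ _ ENNReal.ofReal_ne_top]
  refine lintegral_mono fun s => le_ofReal_mul_extInv hA hσA
    (monotoneOn_Ioi_of_rightInvOn hR hσ_nonneg hσ_right)
    (fun _ => mul_le_mul_of_rightInvOn hR hσ_nonneg hσ_right)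
    (restrict_meas_lt_le_distribFn₀ hE hEΩ f s) ?_
  rw [Measure.restrict_apply' hE, ENNReal.ofReal_toReal hEfin.ne]
  exact measure_mono inter_subset_right

/-- For every measurable `E ⊆ Ω` of finite measure there is a constant
`C(E) < ∞` such that `∫_E f dμ ≤ C(E) · ρ(f)` for every nonnegative measurable `f`
on `Ω`, where `ρ(f) = ∫₀^∞ τ⁻¹(μ_f(s)) ds`. -/
theorem stmt14 {k : ℕ}
    (Ω : Set (EuclideanSpace ℝ (Fin k))) (hΩ : IsOpen Ω)
    (ψ : ℝ → ℝ) (hY : IsYoung ψ) (hsm : StrictMonoOn ψ (Set.Ici 0)) (hΔ : Delta2 ψ)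
    (h0 : Tendsto (fun t => ψ t / t) (𝓝[>] 0) (𝓝 0))
    (htop : Tendsto (fun t => t / ψ t) atTop (𝓝 0))
    (τ : ℝ → ℝ) (hτ0 : τ 0 = 0) (hτ : ∀ t : ℝ, 0 < t → τ t = 1 / ψ (1 / t))
    (σ : ℝ → ℝ) (hσ_nonneg : ∀ t : ℝ, 0 ≤ t → 0 ≤ σ t)
    (hσ_left : ∀ t : ℝ, 0 ≤ t → σ (τ t) = t)
    (hσ_right : ∀ t : ℝ, 0 ≤ t → τ (σ t) = t) :
    ∀ E : Set (EuclideanSpace ℝ (Fin k)), MeasurableSet E → E ⊆ Ω → volume E < ∞ →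
      ∃ C : ℝ≥0∞, C < ∞ ∧
        ∀ f : EuclideanSpace ℝ (Fin k) → ℝ, Measurable f →
          (∀ᵐ x ∂(volume.restrict Ω), 0 ≤ f x) →
          ∫⁻ x in E, ENNReal.ofReal (f x) ≤ C * rhoFn Ω σ f :=
  stmt14_general Ω ψ hY τ hτ0 hτ σ hσ_nonneg hσ_right
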